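/- Let n and m be positive integers with n ≤ m ≤ (2n choose 2), and let G be a finite simple graph with exactly 2n vertices and m edges in which every vertex has positive degree. Set α := m - n·⌊m/n⌋ and ω(2n,m) := (⌊m/n⌋!)^{(n-α)/⌊m/n⌋} · (⌈m/n⌉!)^{α/⌈m/n⌉}. Then ∏_{v ∈ V(G)} (deg(v)!)^{1/(2·deg(v))} ≤ ω(2n,m), with equality if and only if G is almost regular, i.e. |deg(u) - deg(v)| ≤ 1 for all vertices u, v of G. -/
import Mathlib


open Nat

/-- The degree of a vertex, as the cardinality of its neighbor set. -/
noncomputable def ndeg {V : Type*} (G : SimpleGraph V) (v : V) : ℕ :=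
  (G.neighborSet v).ncard

/-- `ω(2n,m) = (⌊m/n⌋!)^{(n-α)/⌊m/n⌋} · (⌈m/n⌉!)^{α/⌈m/n⌉}` where `α = m - n⌊m/n⌋`. -/
noncomputable def omega2 (n m : ℕ) : ℝ :=
  ((m / n)! : ℝ) ^ (((n : ℝ) - ((m - n * (m / n) : ℕ) : ℝ)) / ((m / n : ℕ) : ℝ)) *
    (((m + n - 1) / n)! : ℝ) ^ (((m - n * (m / n) : ℕ) : ℝ) / (((m + n - 1) / n : ℕ) : ℝ))

section AuxConcavity

open Finset


noncomputable def Lf (d : ℕ) : ℝ := Real.log (d !)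
noncomputable def gf (d : ℕ) : ℝ := Lf d / d
noncomputable def sl (i : ℕ) : ℝ := gf (i + 1) - gf i
noncomputable def uf (i : ℕ) : ℝ := i * Real.log (i + 1) - Lf i

lemma Lf_succ (i : ℕ) : Lf (i + 1) = Lf i + Real.log (i + 1) := by
  unfold Lf
  rw [Nat.factorial_succ, Nat.cast_mul, Real.log_mul (by positivity)
    (by exact_mod_cast Nat.cast_ne_zero.mpr i.factorial_ne_zero)]
  push_cast; ring

lemma Lf_eq_sum (i : ℕ) : Lf i = ∑ j ∈ Finset.range i, Real.log (j + 1) := by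
  induction i with
  | zero => simp [Lf]
  | succ k ih => rw [Lf_succ, Finset.sum_range_succ, ih]

lemma uf_eq_sum (i : ℕ) :
    uf i = ∑ j ∈ Finset.range i, (Real.log (i + 1) - Real.log (j + 1)) := by
  rw [uf, Lf_eq_sum, Finset.sum_sub_distrib, Finset.sum_const, Finset.card_range,
    nsmul_eq_mul]

lemma uf_ge (i : ℕ) : (i : ℝ) * Real.log 4 ≤ 2 * uf i := by
  have h2 : uf i = ∑ j ∈ Finset.range i, (Real.log (i + 1) - Real.log (i - j : ℕ)) := by
    rw [uf_eq_sum]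
    rw [← Finset.sum_range_reflect (fun j => (Real.log (i + 1) - Real.log (j + 1))) i]
    apply Finset.sum_congr rfl
    intro j hj
    simp only [Finset.mem_range] at hj
    congr 2
    have h' : i - 1 - j + 1 = i - j := by omega
    rw [← h']
    push_cast
    ring
  have key : ∀ j ∈ Finset.range i,
      Real.log 4 ≤ (Real.log (i + 1) - Real.log (j + 1))
        + (Real.log (i + 1) - Real.log (i - j : ℕ)) := by
    intro j hj
    simp only [Finset.mem_range] at hj
    have hj1 : (0:ℝ) < (j:ℝ) + 1 := by positivity
    have hij : 1 ≤ i - j := by omega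
    have hij1 : (0:ℝ) < ((i - j : ℕ) : ℝ) := by exact_mod_cast hij
    have hprod : (4:ℝ) * (((j:ℝ) + 1) * ((i - j : ℕ) : ℝ)) ≤ ((i:ℝ) + 1) ^ 2 := by
      have hcast : ((i - j : ℕ) : ℝ) = (i : ℝ) - (j : ℝ) := by
        have : (j:ℝ) ≤ i := by exact_mod_cast hj.le
        push_cast [Nat.cast_sub hj.le]; ring
      rw [hcast]; nlinarith [sq_nonneg ((i:ℝ) - 2*(j:ℝ) - 1)]
    have hlog := Real.log_le_log (by positivity) hprod
    rw [Real.log_mul (by norm_num) (by positivity), Real.log_mul (ne_of_gt hj1)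
      (ne_of_gt hij1)] at hlog
    have : Real.log (((i:ℝ) + 1) ^ 2) = 2 * Real.log ((i:ℝ) + 1) := by
      rw [Real.log_pow]; push_cast; ring
    rw [this] at hlog
    linarith
  calc (i : ℝ) * Real.log 4 = ∑ _j ∈ Finset.range i, Real.log 4 := by
        rw [Finset.sum_const, Finset.card_range, nsmul_eq_mul]
    _ ≤ ∑ j ∈ Finset.range i, ((Real.log (i + 1) - Real.log (j + 1))
        + (Real.log (i + 1) - Real.log (i - j : ℕ))) := Finset.sum_le_sum key
    _ = uf i + uf i := by rw [Finset.sum_add_distrib, ← uf_eq_sum, ← h2]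
    _ = 2 * uf i := by ring

lemma one_lt_log_four : (1:ℝ) < Real.log 4 := by
  rw [Real.lt_log_iff_exp_lt (by norm_num)]
  have := Real.exp_one_lt_d9
  linarith

lemma sl_eq (i : ℕ) (hi : 1 ≤ i) : sl i = uf i / (i * (i + 1)) := by
  have hi0 : (i:ℝ) ≠ 0 := by positivity
  have hi1 : (i:ℝ) + 1 ≠ 0 := by positivity
  rw [sl, gf, gf, uf, Lf_succ]
  push_cast
  field_simp
  ring

lemma uf_succ (i : ℕ) :
    uf (i + 1) = uf i + ((i:ℝ) + 1) * (Real.log (i + 2) - Real.log (i + 1)) := by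
  rw [uf, uf, Lf_succ]
  push_cast
  ring

lemma sl_succ_lt (i : ℕ) (hi : 1 ≤ i) : sl (i + 1) < sl i := by
  have h1 : ((i:ℝ) + 1) * (Real.log (i + 2) - Real.log (i + 1)) < 1 := by
    have hx : (0:ℝ) < ((i:ℝ) + 2) / ((i:ℝ) + 1) := by positivity
    have hne : ((i:ℝ) + 2) / ((i:ℝ) + 1) ≠ 1 := by
      intro h
      rw [div_eq_one_iff_eq (by positivity)] at h
      linarith
    have := Real.log_lt_sub_one_of_pos hx hne
    rw [Real.log_div (by positivity) (by positivity)] at this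
    have h2 : ((i:ℝ)+2)/((i:ℝ)+1) - 1 = 1/((i:ℝ)+1) := by
      field_simp
      ring
    rw [h2] at this
    calc ((i:ℝ) + 1) * (Real.log (i + 2) - Real.log (i + 1))
        < ((i:ℝ) + 1) * (1/((i:ℝ)+1)) := by
          apply mul_lt_mul_of_pos_left _ (by positivity)
          exact_mod_cast this
      _ = 1 := by field_simp
  have hui : (i:ℝ) < 2 * uf i := by
    have := uf_ge i
    have hi' : (1:ℝ) ≤ (i:ℝ) := by exact_mod_cast hi
    nlinarith [one_lt_log_four]
  -- key : (i+2) * uf i > i * uf (i+1)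
  have hkey : (i:ℝ) * uf (i + 1) < ((i:ℝ) + 2) * uf i := by
    rw [uf_succ]
    have hi0 : (0:ℝ) ≤ (i:ℝ) := by positivity
    nlinarith [h1]
  rw [sl_eq i hi, sl_eq (i+1) (by omega)]
  rw [div_lt_div_iff₀ (by positivity) (by positivity)]
  push_cast
  nlinarith [hkey]

lemma sl_lt_of_lt {a i : ℕ} (ha : 1 ≤ a) (h : a < i) : sl i < sl a := by
  induction i with
  | zero => omega
  | succ k ih =>
    rcases Nat.lt_or_ge a k with hk | hk
    · exact lt_trans (sl_succ_lt k (by omega)) (ih hk)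
    · have : a = k := by omega
      subst this
      exact sl_succ_lt a ha

lemma gf_succ (i : ℕ) : gf (i + 1) = gf i + sl i := by rw [sl]; ring

lemma chord_upper {a : ℕ} (ha : 1 ≤ a) :
    ∀ d, a + 2 ≤ d → gf d < gf a + ((d:ℝ) - a) * sl a := by
  intro d hd
  induction d, hd using Nat.le_induction with
  | base =>
    have h1 : gf (a + 2) = gf a + sl a + sl (a + 1) := by
      rw [gf_succ (a+1), gf_succ a]
    have h2 : sl (a + 1) < sl a := sl_succ_lt a ha
    rw [h1]
    push_cast
    nlinarith
  | succ d hd ih =>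
    have h2 : sl d < sl a := sl_lt_of_lt ha (by omega)
    rw [gf_succ d]
    push_cast
    push_cast at ih
    nlinarith

lemma chord_lower_aux {a : ℕ} (ha : 1 ≤ a) :
    ∀ k, 1 ≤ k → ∀ d, 1 ≤ d → d + k = a → gf d + (k:ℝ) * sl a < gf a := by
  intro k hk
  induction k, hk using Nat.le_induction with
  | base =>
    intro d hd hda
    have h1 : gf a = gf d + sl d := by
      rw [← hda]; rw [gf_succ d]
    have h2 : sl a < sl d := sl_lt_of_lt hd (by omega)
    rw [h1]; push_cast; nlinarith
  | succ k hk ih =>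
    intro d hd hda
    have h1 : gf (d + 1) + (k:ℝ) * sl a < gf a := ih (d+1) (by omega) (by omega)
    have h2 : gf (d + 1) = gf d + sl d := gf_succ d
    have h3 : sl a < sl d := sl_lt_of_lt hd (by omega)
    push_cast
    push_cast at h1
    nlinarith

lemma chord_lower {a : ℕ} (ha : 1 ≤ a) {d : ℕ} (hd : 1 ≤ d) (hda : d < a) :
    gf d < gf a + ((d:ℝ) - a) * sl a := by
  have := chord_lower_aux ha (a - d) (by omega) d hd (by omega)
  have hc : ((a - d : ℕ) : ℝ) = (a:ℝ) - d := by
    push_cast [Nat.cast_sub hda.le]; ring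
  rw [hc] at this
  nlinarith

lemma chord_le {a d : ℕ} (ha : 1 ≤ a) (hd : 1 ≤ d) :
    gf d ≤ gf a + ((d:ℝ) - a) * sl a := by
  rcases lt_trichotomy d a with h | h | h
  · exact (chord_lower ha hd h).le
  · subst h; simp
  · rcases Nat.eq_or_lt_of_le h with h1 | h1
    · apply le_of_eq
      rw [← h1]
      show gf (a + 1) = _
      rw [gf_succ a]
      push_cast
      ring
    · exact (chord_upper ha d (by omega)).le

lemma chord_eq_iff {a d : ℕ} (ha : 1 ≤ a) (hd : 1 ≤ d) :
    gf d = gf a + ((d:ℝ) - a) * sl a ↔ d = a ∨ d = a + 1 := by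
  constructor
  · intro h
    by_contra hcon
    push_neg at hcon
    rcases lt_trichotomy d a with h1 | h1 | h1
    · exact absurd h (ne_of_lt (chord_lower ha hd h1))
    · exact hcon.1 h1
    · have : a + 2 ≤ d := by omega
      exact absurd h (ne_of_lt (chord_upper ha d this))
  · rintro (rfl | rfl)
    · simp
    · rw [gf_succ a]; push_cast; ring

lemma gf_def (d : ℕ) : gf d = Lf d / d := rfl
lemma Lf_def (d : ℕ) : Lf d = Real.log (d !) := rfl

end AuxConcavity

/-- For a simple graph `G` with `2n` vertices, `m` edges (`n ≤ m ≤ C(2n,2)`), all of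
positive degree, one has `∏_v (deg(v)!)^{1/(2 deg(v))} ≤ ω(2n,m)`, with equality iff
`G` is almost regular. -/


theorem stmt_5 {V : Type*} [Fintype V] (G : SimpleGraph V) (n m : ℕ) (hn : 0 < n)
    (hnm : n ≤ m) (hm : m ≤ (2 * n).choose 2) (hV : Fintype.card V = 2 * n)
    (hE : G.edgeSet.ncard = m) (hdeg : ∀ v, 0 < ndeg G v) :
    (∏ v : V, ((ndeg G v)! : ℝ) ^ (1 / (2 * (ndeg G v : ℝ)))) ≤ omega2 n m ∧
    ((∏ v : V, ((ndeg G v)! : ℝ) ^ (1 / (2 * (ndeg G v : ℝ)))) = omega2 n m ↔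
      ∀ u v : V, |(ndeg G u : ℤ) - (ndeg G v : ℤ)| ≤ 1) := by
  classical
  clear hm
  obtain ⟨a, ha_def⟩ : ∃ a, m / n = a := ⟨_, rfl⟩
  obtain ⟨al, hal_def⟩ : ∃ al, m - n * (m / n) = al := ⟨_, rfl⟩
  obtain ⟨b, hb_def⟩ : ∃ b, (m + n - 1) / n = b := ⟨_, rfl⟩
  have hdm := Nat.div_add_mod m n
  have hmod : al = m % n := by omega
  have hαn : al < n := by rw [hmod]; exact Nat.mod_lt m hn
  have hma : m = n * a + al := by rw [hmod, ← ha_def]; omega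
  obtain ⟨A, hA⟩ : ∃ A, n * a = A := ⟨_, rfl⟩
  rw [hA] at hma
  have ha1 : 1 ≤ a := by rw [← ha_def]; exact (Nat.one_le_div_iff hn).mpr hnm
  have hAn : n ≤ A := by
    calc n = n * 1 := (mul_one n).symm
    _ ≤ n * a := Nat.mul_le_mul_left n ha1
    _ = A := hA
  have e1 : a * n = A := by rw [mul_comm, hA]
  have e2 : (a + 1) * n = A + n := by rw [add_mul, one_mul, e1]
  have e3 : (a + 2) * n = A + 2 * n := by rw [add_mul, e1]
  have hb1 : 1 ≤ b := by
    rw [← hb_def]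
    exact (Nat.one_le_div_iff hn).mpr (by omega)
  have hbcase : (al = 0 ∧ b = a) ∨ (1 ≤ al ∧ b = a + 1) := by
    rcases Nat.eq_zero_or_pos al with h0 | h0
    · left
      refine ⟨h0, ?_⟩
      rw [← hb_def]
      apply Nat.div_eq_of_lt_le
      · rw [e1]; omega
      · rw [e2]; omega
    · right
      refine ⟨h0, ?_⟩
      rw [← hb_def]
      apply Nat.div_eq_of_lt_le
      · rw [e2]; omega
      · rw [e3]; omega
  -- handshake
  have hdeq : ∀ v, ndeg G v = G.degree v := by
    intro v
    rw [ndeg, Set.ncard_eq_toFinset_card', Set.toFinset_card,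
      SimpleGraph.card_neighborSet_eq_degree]
  have hsum : ∑ v : V, ndeg G v = 2 * m := by
    simp only [hdeq]
    rw [SimpleGraph.sum_degrees_eq_twice_card_edges]
    congr 1
    rw [SimpleGraph.edgeFinset, ← Set.ncard_eq_toFinset_card', hE]
  have hd1 : ∀ v : V, 1 ≤ ndeg G v := fun v => hdeg v
  -- real quantities
  set d : V → ℕ := fun v => ndeg G v with hd_def
  set S : ℝ := ∑ v : V, gf (d v) with hS_def
  set T : ℝ := ((n:ℝ) - al) * gf a + (al:ℝ) * gf b with hT_def
  -- product as exp
  have hP : (∏ v : V, ((ndeg G v)! : ℝ) ^ (1 / (2 * (ndeg G v : ℝ)))) = Real.exp (S / 2) := by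
    have hterm : ∀ v : V, ((d v)! : ℝ) ^ (1 / (2 * (d v : ℝ))) = Real.exp (gf (d v) / 2) := by
      intro v
      have hfac : (0:ℝ) < ((d v)! : ℝ) := by exact_mod_cast (d v).factorial_pos
      rw [Real.rpow_def_of_pos hfac]
      congr 1
      have hne : (d v : ℝ) ≠ 0 := by
        have h := hd1 v
        positivity
      rw [gf_def, Lf_def]
      ring
    calc (∏ v : V, ((d v)! : ℝ) ^ (1 / (2 * (d v : ℝ))))
        = ∏ v : V, Real.exp (gf (d v) / 2) := Finset.prod_congr rfl (fun v _ => hterm v)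
      _ = Real.exp (∑ v : V, gf (d v) / 2) := (Real.exp_sum _ _).symm
      _ = Real.exp (S / 2) := by rw [hS_def, Finset.sum_div]
  -- omega2 as exp
  have hb0 : (b:ℝ) ≠ 0 := by positivity
  have ha0 : (a:ℝ) ≠ 0 := by positivity
  have hω : omega2 n m = Real.exp T := by
    rw [omega2, hal_def, hb_def, ha_def]
    have hfa : (0:ℝ) < (a ! : ℝ) := by exact_mod_cast a.factorial_pos
    have hfb : (0:ℝ) < (b ! : ℝ) := by exact_mod_cast b.factorial_pos
    rw [Real.rpow_def_of_pos hfa, Real.rpow_def_of_pos hfb, ← Real.exp_add]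
    congr 1
    rw [hT_def, gf_def, gf_def, Lf_def, Lf_def]
    field_simp
  -- core inequality
  have hchord : ∀ v ∈ Finset.univ (α := V),
      gf (d v) ≤ gf a + ((d v : ℝ) - a) * sl a :=
    fun v _ => chord_le ha1 (hd1 v)
  have hsumd : (∑ v : V, (d v : ℝ)) = 2 * m := by exact_mod_cast hsum
  have hsum2 : ∑ v : V, (gf a + ((d v : ℝ) - a) * sl a) = 2 * T := by
    rw [Finset.sum_add_distrib, Finset.sum_const, Finset.card_univ, hV]
    have h1 : ∑ v : V, ((d v : ℝ) - a) * sl a = ((2*m : ℝ) - (2*n) * (a:ℝ)) * sl a := by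
      rw [← Finset.sum_mul]
      congr 1
      rw [Finset.sum_sub_distrib, hsumd, Finset.sum_const, Finset.card_univ, hV]
      push_cast
      ring
    rw [h1]
    have hmr : (m:ℝ) = n * a + al := by
      have : (m:ℝ) = (A:ℝ) + al := by exact_mod_cast hma
      rw [this]; congr 1; exact_mod_cast hA.symm
    rcases hbcase with ⟨h0, hba⟩ | ⟨h0, hba⟩
    · have hal0 : (al:ℝ) = 0 := by exact_mod_cast h0
      rw [hT_def, hba, hmr, hal0]
      push_cast
      ring
    · have hslab : sl a = gf b - gf a := by rw [hba, gf_succ]; ring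
      rw [hT_def, hslab, hmr]
      push_cast
      ring
  have key1 : S ≤ 2 * T := by
    rw [hS_def, ← hsum2]
    exact Finset.sum_le_sum hchord
  have key2 : S = 2 * T ↔ ∀ v : V, d v = a ∨ d v = a + 1 := by
    rw [hS_def, ← hsum2, Finset.sum_eq_sum_iff_of_le hchord]
    constructor
    · intro h v
      exact (chord_eq_iff ha1 (hd1 v)).mp (h v (Finset.mem_univ v))
    · intro h v _
      exact (chord_eq_iff ha1 (hd1 v)).mpr (h v)
  -- almost regular iff
  have h2A : 2 * n * a = 2 * A := by rw [mul_assoc, hA]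
  have hAR : (∀ v : V, d v = a ∨ d v = a + 1) ↔
      (∀ u v : V, |(d u : ℤ) - (d v : ℤ)| ≤ 1) := by
    constructor
    · intro h u v
      rw [abs_le]
      rcases h u with h1 | h1 <;> rcases h v with h2 | h2 <;> rw [h1, h2] <;>
        constructor <;> push_cast <;> omega
    · intro h v
      have hlow : a ≤ d v := by
        by_contra hcon
        push_neg at hcon
        have hub : ∀ u : V, d u ≤ a := by
          intro u
          have h' := h u v
          rw [abs_le] at h'
          omega
        rcases hbcase with ⟨h0, _⟩ | ⟨h0, _⟩
        · have hlt : ∑ u : V, d u < ∑ _u : V, a :=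
            Finset.sum_lt_sum (fun u _ => hub u) ⟨v, Finset.mem_univ v, hcon⟩
          rw [hsum, Finset.sum_const, Finset.card_univ, hV, smul_eq_mul, h2A] at hlt
          omega
        · have hle : ∑ u : V, d u ≤ ∑ _u : V, a :=
            Finset.sum_le_sum (fun u _ => hub u)
          rw [hsum, Finset.sum_const, Finset.card_univ, hV, smul_eq_mul, h2A] at hle
          omega
      have hhigh : d v ≤ a + 1 := by
        by_contra hcon
        push_neg at hcon
        have hlb : ∀ u : V, a + 1 ≤ d u := by
          intro u
          have h' := h u v
          rw [abs_le] at h'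
          omega
        have hge : ∑ _u : V, (a + 1) ≤ ∑ u : V, d u :=
          Finset.sum_le_sum (fun u _ => hlb u)
        have h2A' : 2 * n * (a + 1) = 2 * A + 2 * n := by
          rw [Nat.mul_add, h2A, mul_one]
        rw [hsum, Finset.sum_const, Finset.card_univ, hV, smul_eq_mul, h2A'] at hge
        omega
      omega
  refine ⟨?_, ?_⟩
  · rw [hP, hω]
    apply Real.exp_le_exp.mpr
    linarith
  · rw [hP, hω, Real.exp_eq_exp]
    constructor
    · intro h
      exact hAR.mp (key2.mp (by linarith))
    · intro h
      have := key2.mpr (hAR.mpr h)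
      linarith
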